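/- Let d ≥ 2 and let Ω be an open subset of ℝ^d. Let u, v : ℝ^d → ℝ be C² on Ω and satisfy the Helmholtz equations −Δu = E·u and −Δv = E·v on Ω with the same energy E ∈ ℝ. Define the vector field F : Ω → ℝ^d by F(x) = ((d−2)/2)(v(x)∇u(x) + u(x)∇v(x)) + (E·u(x)v(x) − ⟨∇u(x),∇v(x)⟩)·x + ⟨x,∇u(x)⟩∇v(x) + ⟨x,∇v(x)⟩∇u(x). Then for every x ∈ Ω, div F(x) = 2E·u(x)·v(x). -/

import Mathlib

open MeasureTheory
open scoped RealInnerProductSpace Classical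

noncomputable section

/-- The Euclidean Laplacian: the sum of the second partial derivatives. -/
def lap {d : ℕ} (u : EuclideanSpace ℝ (Fin d) → ℝ) (x : EuclideanSpace ℝ (Fin d)) : ℝ :=
  ∑ i, fderiv ℝ (fun y => fderiv ℝ u y (EuclideanSpace.single i (1:ℝ))) x
    (EuclideanSpace.single i (1:ℝ))

/-- The divergence: the sum of the partial derivatives of the components. -/
def divg {d : ℕ} (F : EuclideanSpace ℝ (Fin d) → EuclideanSpace ℝ (Fin d))
    (x : EuclideanSpace ℝ (Fin d)) : ℝ :=
  ∑ i, fderiv ℝ (fun y => ⟪F y, EuclideanSpace.single i (1:ℝ)⟫) x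
    (EuclideanSpace.single i (1:ℝ))

/-!
Product rules for the divergence give, for any `u, v` that are `C²` near `x`,
`div F = 2 E u v + ((d-2)/2 v + ⟨x, ∇v⟩)(Δu + E u) + ((d-2)/2 u + ⟨x, ∇u⟩)(Δv + E v)`.
The Hessian terms `⟨D²u x, ∇v⟩` produced by the radial terms `⟨x, ∇u⟩ ∇v` cancel those
produced by `-⟨∇u, ∇v⟩ x` because second derivatives are symmetric, and the dimension enters
only through `div x = d`, which balances the `(d-2)/2` terms. The Helmholtz equations make both
brackets vanish.
-/

section Gradient

variable {F : Type*} [NormedAddCommGroup F] [InnerProductSpace ℝ F] [CompleteSpace F]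
  {u : F → ℝ} {x : F}

theorem ContDiffAt.differentiableAt_gradient (hu : ContDiffAt ℝ 2 u x) :
    DifferentiableAt ℝ (gradient u) x :=
  (InnerProductSpace.toDual ℝ F).symm.toContinuousLinearEquiv.differentiableAt.comp x
    ((hu.fderiv_right (m := 1) le_rfl).differentiableAt one_ne_zero)

theorem ContDiffAt.inner_fderiv_gradient (hu : ContDiffAt ℝ 2 u x) (h w : F) :
    ⟪fderiv ℝ (gradient u) x h, w⟫ = fderiv ℝ (fderiv ℝ u) x h w := by
  have hDu : DifferentiableAt ℝ (fderiv ℝ u) x :=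
    (hu.fderiv_right (m := 1) le_rfl).differentiableAt one_ne_zero
  have hderiv := fderiv_inner_apply ℝ hu.differentiableAt_gradient (differentiableAt_const w) h
  simp only [inner_gradient_left, fderiv_fun_const, Pi.zero_apply, zero_apply, map_zero,
    zero_add] at hderiv
  rw [← hderiv, fderiv_clm_apply hDu (differentiableAt_const w)]
  simp

theorem ContDiffAt.inner_fderiv_gradient_comm (hu : ContDiffAt ℝ 2 u x) (h w : F) :
    ⟪fderiv ℝ (gradient u) x h, w⟫ = ⟪h, fderiv ℝ (gradient u) x w⟫ := by
  rw [real_inner_comm _ h, hu.inner_fderiv_gradient, hu.inner_fderiv_gradient,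
    (hu.isSymmSndFDerivAt (by simp)).eq]

theorem ContDiffAt.fderiv_inner_id_gradient (hu : ContDiffAt ℝ 2 u x) (h : F) :
    fderiv ℝ (fun y => ⟪y, gradient u y⟫) x h
      = ⟪gradient u x, h⟫ + ⟪fderiv ℝ (gradient u) x x, h⟫ := by
  rw [fderiv_inner_apply ℝ differentiableAt_fun_id hu.differentiableAt_gradient, fderiv_fun_id,
    ContinuousLinearMap.id_apply, ← hu.inner_fderiv_gradient_comm, real_inner_comm (gradient u x),
    add_comm]

end Gradient

section Divergence

variable {d : ℕ} {x : EuclideanSpace ℝ (Fin d)}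

theorem divg_eq_trace {F : EuclideanSpace ℝ (Fin d) → EuclideanSpace ℝ (Fin d)}
    (hF : DifferentiableAt ℝ F x) :
    divg F x = LinearMap.trace ℝ _ (fderiv ℝ F x : EuclideanSpace ℝ (Fin d) →ₗ[ℝ] _) := by
  rw [LinearMap.trace_eq_sum_inner _ (EuclideanSpace.basisFun (Fin d) ℝ), divg]
  refine Finset.sum_congr rfl fun i _ => ?_
  rw [fderiv_inner_apply ℝ hF (differentiableAt_const _)]
  simp [real_inner_comm]

theorem divg_add {F G : EuclideanSpace ℝ (Fin d) → EuclideanSpace ℝ (Fin d)}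
    (hF : DifferentiableAt ℝ F x) (hG : DifferentiableAt ℝ G x) :
    divg (fun y => F y + G y) x = divg F x + divg G x := by
  rw [divg_eq_trace (hF.fun_add hG), divg_eq_trace hF, divg_eq_trace hG, fderiv_fun_add hF hG]
  simp

theorem divg_smul {f : EuclideanSpace ℝ (Fin d) → ℝ}
    {G : EuclideanSpace ℝ (Fin d) → EuclideanSpace ℝ (Fin d)}
    (hf : DifferentiableAt ℝ f x) (hG : DifferentiableAt ℝ G x) :
    divg (fun y => f y • G y) x = f x * divg G x + fderiv ℝ f x (G x) := by
  rw [divg_eq_trace (hf.fun_smul hG), divg_eq_trace hG, fderiv_fun_smul hf hG]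
  simp

theorem divg_const_smul (c : ℝ) (F : EuclideanSpace ℝ (Fin d) → EuclideanSpace ℝ (Fin d)) :
    divg (fun y => c • F y) x = c * divg F x := by
  simp only [divg, real_inner_smul_left, Finset.mul_sum]
  refine Finset.sum_congr rfl fun i _ => ?_
  rw [show (fun y => c * ⟪F y, EuclideanSpace.single i (1 : ℝ)⟫)
      = c • fun y => ⟪F y, EuclideanSpace.single i (1 : ℝ)⟫ from rfl, fderiv_const_smul_field]
  rfl

theorem divg_id : divg (fun y => y) x = d := by
  rw [divg_eq_trace differentiableAt_fun_id, fderiv_fun_id]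
  simp

theorem divg_gradient (u : EuclideanSpace ℝ (Fin d) → ℝ) : divg (gradient u) = lap u := by
  ext x
  simp [divg, lap, inner_gradient_left]

end Divergence

section Pohozaev

variable {d : ℕ} {x : EuclideanSpace ℝ (Fin d)} {u v : EuclideanSpace ℝ (Fin d) → ℝ}

def pohozaevField (d : ℕ) (E : ℝ) (u v : EuclideanSpace ℝ (Fin d) → ℝ) :
    EuclideanSpace ℝ (Fin d) → EuclideanSpace ℝ (Fin d) := fun y =>
  (((d : ℝ) - 2) / 2) • (v y • gradient u y + u y • gradient v y)
    + (E * u y * v y - ⟪gradient u y, gradient v y⟫) • y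
    + ⟪y, gradient u y⟫ • gradient v y + ⟪y, gradient v y⟫ • gradient u y

theorem divg_pohozaevField (E : ℝ) (hu : ContDiffAt ℝ 2 u x) (hv : ContDiffAt ℝ 2 v x) :
    divg (pohozaevField d E u v) x = 2 * E * u x * v x
      + (((d : ℝ) - 2) / 2 * v x + ⟪x, gradient v x⟫) * (lap u x + E * u x)
      + (((d : ℝ) - 2) / 2 * u x + ⟪x, gradient u x⟫) * (lap v x + E * v x) := by
  have du : DifferentiableAt ℝ u x := hu.differentiableAt two_ne_zero
  have dv : DifferentiableAt ℝ v x := hv.differentiableAt two_ne_zero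
  have dgu := hu.differentiableAt_gradient
  have dgv := hv.differentiableAt_gradient
  have dguv : DifferentiableAt ℝ (fun y => ⟪gradient u y, gradient v y⟫) x := dgu.inner ℝ dgv
  have dru : DifferentiableAt ℝ (fun y => ⟪y, gradient u y⟫) x :=
    differentiableAt_fun_id.inner ℝ dgu
  have drv : DifferentiableAt ℝ (fun y => ⟪y, gradient v y⟫) x :=
    differentiableAt_fun_id.inner ℝ dgv
  have fderiv_lagrangian : fderiv ℝ (fun y => E * u y * v y - ⟪gradient u y, gradient v y⟫) x x
      = E * (v x * ⟪x, gradient u x⟫ + u x * ⟪x, gradient v x⟫)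
        - (⟪fderiv ℝ (gradient u) x x, gradient v x⟫
          + ⟪fderiv ℝ (gradient v) x x, gradient u x⟫) := by
    rw [fderiv_fun_sub (by fun_prop) dguv, sub_apply, fderiv_inner_apply ℝ dgu dgv]
    simp only [differentiableAt_const, du, DifferentiableAt.fun_mul, dv, fderiv_fun_mul,
      fderiv_fun_const, Pi.zero_apply, smul_zero, add_zero, add_apply, smul_apply, smul_eq_mul,
      inner_gradient_left, inner_gradient_right, Real.ringHom_apply]
    ring
  unfold pohozaevField
  rw [divg_add (by fun_prop) (by fun_prop), divg_add (by fun_prop) (by fun_prop),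
    divg_add (by fun_prop) (by fun_prop), divg_const_smul, divg_add (by fun_prop) (by fun_prop),
    divg_smul dv dgu, divg_smul du dgv, divg_smul (by fun_prop) differentiableAt_fun_id,
    divg_smul dru dgv, divg_smul drv dgu, divg_id, divg_gradient, divg_gradient,
    fderiv_lagrangian, hu.fderiv_inner_id_gradient, hv.fderiv_inner_id_gradient,
    ← inner_gradient_left, ← inner_gradient_left, real_inner_comm (gradient u x) (gradient v x)]
  ring

end Pohozaev

theorem divergence_identity_equal_energies_general
    (d : ℕ) (Ω : Set (EuclideanSpace ℝ (Fin d))) (hΩ : IsOpen Ω)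
    (u v : EuclideanSpace ℝ (Fin d) → ℝ) (En : ℝ)
    (hu : ContDiffOn ℝ 2 u Ω) (hv : ContDiffOn ℝ 2 v Ω)
    (hHu : ∀ x ∈ Ω, -lap u x = En * u x) (hHv : ∀ x ∈ Ω, -lap v x = En * v x) :
    ∀ x ∈ Ω,
      divg (fun y =>
          (((d : ℝ) - 2) / 2) • (v y • gradient u y + u y • gradient v y)
          + (En * u y * v y - ⟪gradient u y, gradient v y⟫) • y
          + ⟪y, gradient u y⟫ • gradient v y + ⟪y, gradient v y⟫ • gradient u y) x
        = 2 * En * u x * v x := by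
  intro x hx
  have hux : lap u x + En * u x = 0 := by linarith [hHu x hx]
  have hvx : lap v x + En * v x = 0 := by linarith [hHv x hx]
  have hΩx := hΩ.mem_nhds hx
  calc divg (pohozaevField d En u v) x
      = 2 * En * u x * v x
        + (((d : ℝ) - 2) / 2 * v x + ⟪x, gradient v x⟫) * (lap u x + En * u x)
        + (((d : ℝ) - 2) / 2 * u x + ⟪x, gradient u x⟫) * (lap v x + En * v x) :=
        divg_pohozaevField En (hu.contDiffAt hΩx) (hv.contDiffAt hΩx)
    _ = 2 * En * u x * v x := by rw [hux, hvx]; ring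

theorem divergence_identity_equal_energies
    (d : ℕ) (hd : 2 ≤ d) (Ω : Set (EuclideanSpace ℝ (Fin d))) (hΩ : IsOpen Ω)
    (u v : EuclideanSpace ℝ (Fin d) → ℝ) (En : ℝ)
    (hu : ContDiffOn ℝ 2 u Ω) (hv : ContDiffOn ℝ 2 v Ω)
    (hHu : ∀ x ∈ Ω, -lap u x = En * u x) (hHv : ∀ x ∈ Ω, -lap v x = En * v x) :
    ∀ x ∈ Ω,
      divg (fun y =>
          (((d : ℝ) - 2) / 2) • (v y • gradient u y + u y • gradient v y)
          + (En * u y * v y - ⟪gradient u y, gradient v y⟫) • y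
          + ⟪y, gradient u y⟫ • gradient v y + ⟪y, gradient v y⟫ • gradient u y) x
        = 2 * En * u x * v x :=
  divergence_identity_equal_energies_general d Ω hΩ u v En hu hv hHu hHv
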